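/- arXiv:1911.02899 — 3 statements merged into one kernel-verified Lean document; each statement's English description precedes it below -/
import Mathlib

section
/- Let $V_\delta:\mathbb{R}^n\times\mathbb{R}^n\to\mathbb{R}_{\ge 0}$ satisfy (i) $c_{\delta,l}\|x-z\|\le V_\delta(x,z)\le c_{\delta,u}\|x-z\|$ for all $x,z$, (ii) the norm-like inequality $V_\delta(x_1+\Delta x, x_2)\le V_\delta(x_1,x_2)+V_\delta(x_2+\Delta x, x_2)$ for all $x_1,x_2,\Delta x$, and (iii) the continuity bound $V_\delta(x_1, x_2+\Delta x)\le (1+L_\delta\|\Delta x\|)V_\delta(x_1-\Delta x, x_2)$ for all $x_1,x_2,\Delta x$. Then for all $x_1,x_2,\Delta x_1,\Delta x_2\in\mathbb{R}^n$ it holds that $V_\delta(x_1+\Delta x_1, x_2+\Delta x_2)\le (1+L_\delta\|\Delta x_2\|)\big(V_\delta(x_1,x_2)+c_{\delta,u}\|\Delta x_1-\Delta x_2\|\big)$. -/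
/-- Continuity condition (11) for an incremental Lyapunov function derived from
the norm equivalence, the norm-like inequality and the Lipschitz-like bound. -/
theorem incremental_lyapunov_continuity
    {E : Type*} [NormedAddCommGroup E] [NormedSpace ℝ E]
    (V : E → E → ℝ) (cl cu Lδ : ℝ)
    (hcl : 0 < cl) (hcu : 0 < cu) (hLδ : 0 ≤ Lδ)
    (hbound : ∀ x z : E, cl * ‖x - z‖ ≤ V x z ∧ V x z ≤ cu * ‖x - z‖)
    (hnorm : ∀ x₁ x₂ Δx : E, V (x₁ + Δx) x₂ ≤ V x₁ x₂ + V (x₂ + Δx) x₂)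
    (hcont : ∀ x₁ x₂ Δx : E, V x₁ (x₂ + Δx) ≤ (1 + Lδ * ‖Δx‖) * V (x₁ - Δx) x₂) :
    ∀ x₁ x₂ Δx₁ Δx₂ : E,
      V (x₁ + Δx₁) (x₂ + Δx₂) ≤
        (1 + Lδ * ‖Δx₂‖) * (V x₁ x₂ + cu * ‖Δx₁ - Δx₂‖) := by
  intro x₁ x₂ Δx₁ Δx₂
  have h1 := hcont (x₁ + Δx₁) x₂ Δx₂
  have h2 := hnorm x₁ x₂ (Δx₁ - Δx₂)
  have h3 := (hbound (x₂ + (Δx₁ - Δx₂)) x₂).2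
  have hfac : (0:ℝ) ≤ 1 + Lδ * ‖Δx₂‖ := by positivity
  have heq : x₁ + Δx₁ - Δx₂ = x₁ + (Δx₁ - Δx₂) := by abel
  rw [heq] at h1
  have h3' : V (x₂ + (Δx₁ - Δx₂)) x₂ ≤ cu * ‖Δx₁ - Δx₂‖ := by
    simpa using h3
  calc V (x₁ + Δx₁) (x₂ + Δx₂) ≤ (1 + Lδ * ‖Δx₂‖) * V (x₁ + (Δx₁ - Δx₂)) x₂ := h1
    _ ≤ (1 + Lδ * ‖Δx₂‖) * (V x₁ x₂ + cu * ‖Δx₁ - Δx₂‖) := by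
        apply mul_le_mul_of_nonneg_left _ hfac
        exact h2.trans (by linarith)
end

section
/- Suppose the contraction rate satisfies the Lipschitz bound $\|(G(x,\kappa(x,z,v))-G(z,v))\theta^j\|_P \le L_{\mathbb{B},\rho}\,\|x-z\|_P$ for every vertex $\theta^j$ of $\mathbb{B}_\infty$ and every admissible triple $(x,z,v)\in\Psi$, and that $\|f_\theta(x,\kappa(x,z,v))-f_\theta(z,v)\|_P\le\rho_\theta\|x-z\|_P$ on $\Psi$. Then for every $\theta^+\in\theta\oplus\Delta\eta\,\mathbb{B}_\infty$ (i.e. $\|\theta^+-\theta\|_\infty\le\Delta\eta$) with $\Delta\eta\ge 0$, the contraction rate at $\theta^+$ satisfies $\|f_{\theta^+}(x,\kappa(x,z,v))-f_{\theta^+}(z,v)\|_P\le(\rho_\theta+\Delta\eta\, L_{\mathbb{B},\rho})\|x-z\|_P$ for all $(x,z,v)\in\Psi$. -/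
open Matrix

section Aux

open scoped MatrixOrder in
/-- Matrix square root (replacement for the removed `PosSemidef.sqrt`). -/
noncomputable def matSqrtP {n : ℕ} (P : Matrix (Fin n) (Fin n) ℝ) : Matrix (Fin n) (Fin n) ℝ :=
  CFC.sqrt P

open scoped MatrixOrder in
lemma matSqrtP_transpose {n : ℕ} (P : Matrix (Fin n) (Fin n) ℝ) :
    (matSqrtP P)ᵀ = matSqrtP P := by
  have := (CFC.sqrt_nonneg P).posSemidef.1
  rw [Matrix.IsHermitian, Matrix.conjTranspose_eq_transpose_of_trivial] at this
  exact this

open scoped MatrixOrder in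
lemma matSqrtP_mul_self {n : ℕ} (P : Matrix (Fin n) (Fin n) ℝ) (hP : P.PosDef) :
    matSqrtP P * matSqrtP P = P :=
  CFC.sqrt_mul_sqrt_self P hP.posSemidef.nonneg

/-- Euclidean norm bridging lemma for the `P`-weighted norm. -/
lemma normP_eq_euclidean {n : ℕ} (P : Matrix (Fin n) (Fin n) ℝ) (hP : P.PosDef)
    (v : Fin n → ℝ) :
    Real.sqrt (v ⬝ᵥ P *ᵥ v) =
      ‖(WithLp.equiv 2 (Fin n → ℝ)).symm (matSqrtP P *ᵥ v)‖ := by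
  set S := matSqrtP P with hS
  have hsymm : Sᵀ = S := by
    exact matSqrtP_transpose P
  have hquad : v ⬝ᵥ P *ᵥ v = (S *ᵥ v) ⬝ᵥ (S *ᵥ v) := by
    conv_lhs => rw [← matSqrtP_mul_self P hP]
    rw [← hS, ← Matrix.mulVec_mulVec, Matrix.dotProduct_mulVec, ← Matrix.mulVec_transpose,
      hsymm]
  rw [hquad, EuclideanSpace.norm_eq]
  congr 1
  simp [dotProduct, sq_abs, pow_two]

end Aux

/-- Proposition 4: Lipschitz continuity of the contraction rate in the parameter
(quadratic case). If `f_θ(x,u) = f(x,u) + G(x,u)θ` contracts with rate `ρ_θ`, and the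
vertex Lipschitz bound on `G` holds, then for `‖θ⁺ - θ‖_∞ ≤ Δη` the dynamics `f_{θ⁺}`
contracts with rate `ρ_θ + Δη L_{𝔹,ρ}`. -/
theorem contraction_rate_parameter_lipschitz {n p : ℕ} {U : Type*}
    (P : Matrix (Fin n) (Fin n) ℝ) (hP : P.PosDef)
    (normP : (Fin n → ℝ) → ℝ)
    (hnormP : ∀ v : Fin n → ℝ, normP v = Real.sqrt (v ⬝ᵥ P *ᵥ v))
    (f : (Fin n → ℝ) → U → (Fin n → ℝ))
    (G : (Fin n → ℝ) → U → Matrix (Fin n) (Fin p) ℝ)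
    (κ : (Fin n → ℝ) → (Fin n → ℝ) → U → U)
    (Ψ : Set ((Fin n → ℝ) × (Fin n → ℝ) × U))
    (θ : Fin p → ℝ) (ρθ LBρ Δη : ℝ) (hρθ : 0 ≤ ρθ) (hLBρ : 0 ≤ LBρ) (hΔη : 0 ≤ Δη)
    (hLip : ∀ (σ : Fin p → Bool) x z v, (x, z, v) ∈ Ψ →
      normP ((G x (κ x z v) - G z v) *ᵥ (fun i => if σ i then (1 : ℝ) else -1)) ≤
        LBρ * normP (x - z))
    (hcontr : ∀ x z v, (x, z, v) ∈ Ψ →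
      normP ((f x (κ x z v) + G x (κ x z v) *ᵥ θ) - (f z v + G z v *ᵥ θ)) ≤
        ρθ * normP (x - z)) :
    ∀ θp : Fin p → ℝ, (∀ i, |θp i - θ i| ≤ Δη) →
      ∀ x z v, (x, z, v) ∈ Ψ →
        normP ((f x (κ x z v) + G x (κ x z v) *ᵥ θp) - (f z v + G z v *ᵥ θp)) ≤
          (ρθ + Δη * LBρ) * normP (x - z) := by
  -- Express normP through a genuine norm
  set g : (Fin n → ℝ) → EuclideanSpace ℝ (Fin n) :=
    fun v => (WithLp.equiv 2 (Fin n → ℝ)).symm (matSqrtP P *ᵥ v) with hg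
  have hN : ∀ v, normP v = ‖g v‖ := fun v => by
    rw [hnormP, normP_eq_euclidean P hP]
  have hgadd : ∀ u w, g (u + w) = g u + g w := by
    intro u w
    simp [hg, Matrix.mulVec_add]
  have hgsmul : ∀ (c : ℝ) w, g (c • w) = c • g w := by
    intro c w
    simp [hg, Matrix.mulVec_smul]
  have hNadd : ∀ u w, normP (u + w) ≤ normP u + normP w := by
    intro u w
    rw [hN, hN, hN, hgadd]
    exact norm_add_le _ _
  have hNsmul : ∀ (c : ℝ) w, normP (c • w) = |c| * normP w := by
    intro c w
    rw [hN, hN, hgsmul, norm_smul, Real.norm_eq_abs]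
  have hNnonneg : ∀ w, 0 ≤ normP w := fun w => by rw [hN]; exact norm_nonneg _
  intro θp hθp x z v hΨ
  set u := κ x z v with hu
  set A := G x u - G z v with hA
  set c := normP (x - z) with hc
  have hcnn : 0 ≤ c := hNnonneg _
  -- Key box lemma: for any δ in the Δη-box, normP (A *ᵥ δ) ≤ Δη * LBρ * c
  have key : ∀ k : ℕ, ∀ δ : Fin p → ℝ, (∀ i, |δ i| ≤ Δη) →
      (∀ i : Fin p, k ≤ (i : ℕ) → δ i = Δη ∨ δ i = -Δη) →
      normP (A *ᵥ δ) ≤ Δη * (LBρ * c) := by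
    intro k
    induction k with
    | zero =>
      intro δ _ hvert
      -- δ = Δη • sign vector
      set σ : Fin p → Bool := fun i => decide (δ i = Δη) with hσ
      have hδ : δ = Δη • (fun i => if σ i then (1 : ℝ) else -1) := by
        funext i
        simp only [Pi.smul_apply, smul_eq_mul]
        by_cases hz : δ i = Δη
        · have hb : σ i = true := by simp [hσ, hz]
          rw [hb, hz]; simp
        · have h : δ i = -Δη := (hvert i (Nat.zero_le _)).resolve_left hz
          have hb : σ i = false := by simp [hσ, hz]
          rw [hb, h]; simp
      rw [hδ, Matrix.mulVec_smul, hNsmul, abs_of_nonneg hΔη]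
      exact mul_le_mul_of_nonneg_left (hLip σ x z v hΨ) hΔη
    | succ k ih =>
      intro δ hbox hvert
      by_cases hk : k < p
      · set i₀ : Fin p := ⟨k, hk⟩ with hi₀
        rcases eq_or_lt_of_le hΔη with hΔ0 | hΔpos
        · -- Δη = 0 : δ = 0
          have hδ0 : δ = 0 := by
            funext i
            have h1 : |δ i| ≤ 0 := hΔ0 ▸ hbox i
            simpa using abs_nonpos_iff.mp h1
          rw [hδ0, Matrix.mulVec_zero]
          have : normP (0 : Fin n → ℝ) = 0 := by
            have h0 : (0 : Fin n → ℝ) = (0 : ℝ) • (0 : Fin n → ℝ) := by simp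
            rw [h0, hNsmul]; simp
          rw [this]
          positivity
        · -- δ i₀ is a convex combination of ±Δη
          set δp : Fin p → ℝ := Function.update δ i₀ Δη with hδp
          set δm : Fin p → ℝ := Function.update δ i₀ (-Δη) with hδm
          set t : ℝ := (δ i₀ + Δη) / (2 * Δη) with ht
          have habs : |δ i₀| ≤ Δη := hbox i₀
          have ht0 : 0 ≤ t := by
            apply div_nonneg _ (by linarith)
            have := neg_le_of_abs_le habs; linarith
          have ht1 : t ≤ 1 := by
            rw [div_le_one (by linarith)]
            have := le_of_abs_le habs; linarith
          have hsplit : δ = t • δp + (1 - t) • δm := by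
            funext i
            by_cases hi : i = i₀
            · subst hi
              have hne : Δη ≠ 0 := ne_of_gt hΔpos
              simp only [Pi.add_apply, Pi.smul_apply, hδp, hδm, Function.update_self,
                smul_eq_mul, ht]
              field_simp
              ring
            · simp only [Pi.add_apply, Pi.smul_apply, hδp, hδm,
                Function.update_of_ne hi, smul_eq_mul]
              ring
          have hδpbox : ∀ i, |δp i| ≤ Δη := by
            intro i
            by_cases hi : i = i₀
            · subst hi; simp [hδp, abs_of_nonneg hΔη]
            · simpa [hδp, Function.update_of_ne hi] using hbox i
          have hδmbox : ∀ i, |δm i| ≤ Δη := by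
            intro i
            by_cases hi : i = i₀
            · subst hi; simp [hδm, abs_of_nonneg hΔη]
            · simpa [hδm, Function.update_of_ne hi] using hbox i
          have hδpvert : ∀ i : Fin p, k ≤ (i : ℕ) → δp i = Δη ∨ δp i = -Δη := by
            intro i hki
            by_cases hi : i = i₀
            · subst hi; left; simp [hδp]
            · rw [hδp, Function.update_of_ne hi]
              apply hvert i
              rcases Nat.lt_or_ge (i : ℕ) (k + 1) with h | h
              · exfalso
                apply hi
                apply Fin.ext
                simp only [hi₀]
                omega
              · exact h
          have hδmvert : ∀ i : Fin p, k ≤ (i : ℕ) → δm i = Δη ∨ δm i = -Δη := by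
            intro i hki
            by_cases hi : i = i₀
            · subst hi; right; simp [hδm]
            · rw [hδm, Function.update_of_ne hi]
              apply hvert i
              rcases Nat.lt_or_ge (i : ℕ) (k + 1) with h | h
              · exfalso
                apply hi
                apply Fin.ext
                simp only [hi₀]
                omega
              · exact h
          calc normP (A *ᵥ δ)
              = normP (t • (A *ᵥ δp) + (1 - t) • (A *ᵥ δm)) := by
                rw [hsplit, Matrix.mulVec_add, Matrix.mulVec_smul, Matrix.mulVec_smul]
            _ ≤ normP (t • (A *ᵥ δp)) + normP ((1 - t) • (A *ᵥ δm)) := hNadd _ _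
            _ = t * normP (A *ᵥ δp) + (1 - t) * normP (A *ᵥ δm) := by
                rw [hNsmul, hNsmul, abs_of_nonneg ht0, abs_of_nonneg (by linarith)]
            _ ≤ t * (Δη * (LBρ * c)) + (1 - t) * (Δη * (LBρ * c)) := by
                apply add_le_add
                · exact mul_le_mul_of_nonneg_left (ih δp hδpbox hδpvert) ht0
                · exact mul_le_mul_of_nonneg_left (ih δm hδmbox hδmvert) (by linarith)
            _ = Δη * (LBρ * c) := by ring
      · -- k ≥ p : condition at k is the same
        apply ih δ hbox
        intro i hki
        apply hvert i
        omega
  -- Decompose the difference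
  have hdecomp :
      (f x u + G x u *ᵥ θp) - (f z v + G z v *ᵥ θp) =
        ((f x u + G x u *ᵥ θ) - (f z v + G z v *ᵥ θ)) + A *ᵥ (θp - θ) := by
    rw [hA, Matrix.sub_mulVec, Matrix.mulVec_sub, Matrix.mulVec_sub]
    funext i
    simp only [Pi.add_apply, Pi.sub_apply]
    ring
  rw [hdecomp]
  calc normP (((f x u + G x u *ᵥ θ) - (f z v + G z v *ᵥ θ)) + A *ᵥ (θp - θ))
      ≤ normP ((f x u + G x u *ᵥ θ) - (f z v + G z v *ᵥ θ)) + normP (A *ᵥ (θp - θ)) :=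
        hNadd _ _
    _ ≤ ρθ * c + Δη * (LBρ * c) := by
        apply add_le_add (hcontr x z v hΨ)
        exact key p (θp - θ) (fun i => hθp i)
          (fun i hi => absurd hi (Nat.not_le.mpr i.isLt))
    _ = (ρθ + Δη * LBρ) * c := by ring
end

section
/- (Monotone set-valued tube implies recursive feasibility, abstract version.) Let $\Phi$ map (set, input, parameter-set) triples to subsets of $\mathbb{R}^n$ such that: (a) for all $x\in\mathbb{X}$, $d\in\mathbb{D}$, $\theta\in\Theta$ one has $f_w(x,u,d,\theta)\in\Phi(\mathbb{X},u,\Theta)$; (b) $\Phi$ is monotone: $\mathbb{X}'\subseteq\mathbb{X}$ and $\Theta'\subseteq\Theta$ imply $\Phi(\mathbb{X}',u,\Theta')\subseteq\Phi(\mathbb{X},u,\Theta)$. Suppose sets $\mathbb{X}_0,\dots,\mathbb{X}_N$ and inputs $u_0,\dots,u_N$ satisfy $x_t\in\mathbb{X}_0$, $\mathbb{X}_{k+1}\supseteq\Phi(\mathbb{X}_k,u_k,\Theta_t)$ for $k<N$, and the terminal condition $\Phi(\mathbb{X}_N,u_N,\Theta_t)\subseteq\mathbb{X}_N$. If $\Theta_{t+1}\subseteq\Theta_t$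 and $x_{t+1}=f_w(x_t,u_0,d_t,\theta^*)$ with $d_t\in\mathbb{D}$, $\theta^*\in\Theta_{t+1}$, then the shifted sequence $\mathbb{X}'_k:=\mathbb{X}_{k+1}$ for $k<N$, $\mathbb{X}'_N:=\mathbb{X}_N$, with inputs $u'_k:=u_{k+1}$ for $k<N$, $u'_N:=u_N$, satisfies the same three conditions at time $t+1$: $x_{t+1}\in\mathbb{X}'_0$, $\mathbb{X}'_{k+1}\supseteq\Phi(\mathbb{X}'_k,u'_k,\Theta_{t+1})$ for $k<N$, and $\Phi(\mathbb{X}'_N,u'_N,\Theta_{t+1})\subseteq\mathbb{X}'_N$. -/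
/-- Abstract recursive feasibility (core of Theorem 1): a monotone overapproximating
set-valued tube map `Φ` together with nonincreasing parameter sets preserves
feasibility of the shifted candidate tube sequence. -/
theorem monotone_tube_recursive_feasibility
    {S U D PT : Type*}
    (fw : S → U → D → PT → S)
    (𝔻 : Set D)
    (Φ : Set S → U → Set PT → Set S)
    (hover : ∀ (X : Set S) (u : U) (Θ : Set PT) (x : S) (d : D) (θ : PT),
      x ∈ X → d ∈ 𝔻 → θ ∈ Θ → fw x u d θ ∈ Φ X u Θ)
    (hmono : ∀ (X' X : Set S) (u : U) (Θ' Θ : Set PT),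
      X' ⊆ X → Θ' ⊆ Θ → Φ X' u Θ' ⊆ Φ X u Θ)
    (N : ℕ) (𝕏 : ℕ → Set S) (u : ℕ → U)
    (Θt Θtp : Set PT) (hΘ : Θtp ⊆ Θt)
    (xt : S) (hx0 : xt ∈ 𝕏 0)
    (htube : ∀ k < N, Φ (𝕏 k) (u k) Θt ⊆ 𝕏 (k + 1))
    (hterm : Φ (𝕏 N) (u N) Θt ⊆ 𝕏 N)
    (dt : D) (hd : dt ∈ 𝔻)
    (θstar : PT) (hθstar : θstar ∈ Θtp)
    (xtp : S) (hxtp : xtp = fw xt (u 0) dt θstar)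
    (X' : ℕ → Set S) (hX' : ∀ k, X' k = if k < N then 𝕏 (k + 1) else 𝕏 N)
    (u' : ℕ → U) (hu' : ∀ k, u' k = if k < N then u (k + 1) else u N) :
    xtp ∈ X' 0 ∧
    (∀ k < N, Φ (X' k) (u' k) Θtp ⊆ X' (k + 1)) ∧
    Φ (X' N) (u' N) Θtp ⊆ X' N := by
  have hstar : θstar ∈ Θt := hΘ hθstar
  refine ⟨?_, ?_, ?_⟩
  · rw [hX' 0, hxtp]
    by_cases h : 0 < N
    · simp only [h, if_pos]
      exact htube 0 h (hover _ _ _ _ _ _ hx0 hd hstar)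
    · have hN : N = 0 := Nat.eq_zero_of_not_pos h
      simp only [h, if_neg, if_false]
      subst hN
      exact hterm (hover _ _ _ _ _ _ hx0 hd hstar)
  · intro k hk
    rw [hX' k, hX' (k+1), hu' k, if_pos hk, if_pos hk]
    by_cases h : k + 1 < N
    · rw [if_pos h]
      exact (hmono _ _ _ _ _ (subset_refl _) hΘ).trans (htube (k+1) h)
    · rw [if_neg h]
      have : k + 1 = N := Nat.le_antisymm hk (Nat.not_lt.mp h)
      subst this
      exact (hmono _ _ _ _ _ (subset_refl _) hΘ).trans (hterm)
  · rw [hX' N, hu' N, if_neg (lt_irrefl N), if_neg (lt_irrefl N)]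
    exact (hmono _ _ _ _ _ (subset_refl _) hΘ).trans hterm
end
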